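/- Let ε > 0 and suppose a run of pessimistic revelation game fictitious play (each step selecting a V-minimizing pair among the ε-best responses to the empirical history) converges, i.e., the empirical mixed strategies σ̄ᵗ converge to a mixed profile σ*. Then σ* is locally V-optimal: for every data-player j and every unilateral deviation (θⱼ, aⱼ) ∈ Θ × A' whose expected revelation-game loss against σ*₋ⱼ is strictly less than ε (equivalently E_{σ*₋ⱼ}[U^rev_j(θⱼ, aⱼ, ·)] > −ε), one has V(σ*) ≤ V(θⱼ, aⱼ, σ*₋ⱼ). -/
import Mathlib


open Finset Filter

/-- The multiset of the other observed data points. -/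
def othersData {A : Type} {m : ℕ} (d : Fin m → A) (j : Fin m) : Multiset A :=
  (Finset.univ : Finset {k : Fin m // k ≠ j}).val.map fun k => d k.1

/-- The `G`-regret of a reported type `th` for data point `j`: the gap between the best
achievable utility against the other observed data points and the utility of the
observed action `d j`. -/
noncomputable def regretG {Θ A : Type} [Fintype A] [Nonempty A] {m : ℕ}
    (uG : A → Multiset A → Θ → ℝ) (d : Fin m → A) (j : Fin m) (th : Θ) : ℝ :=
  (Finset.univ.sup' Finset.univ_nonempty fun a => uG a (othersData d j) th)
    - uG (d j) (othersData d j) th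

/-- The expected `G'`-utility of counterfactual action `a` with reported type `th`,
against the mixed profile `σ` of the other data-players' reported type–action pairs. -/
noncomputable def expUG' {Θ A' : Type} [Fintype Θ] [Fintype A'] {m : ℕ}
    (uG' : A' → Multiset A' → Θ → ℝ) (σ : Fin m → Θ × A' → ℝ) (j : Fin m)
    (a : A') (th : Θ) : ℝ :=
  ∑ p : {k : Fin m // k ≠ j} → Θ × A',
    (∏ k, σ k.1 (p k)) *
      uG' a ((Finset.univ : Finset {k : Fin m // k ≠ j}).val.map fun k => (p k).2) th

/-- The `G'`-regret of a reported pair (type `th`, action `ahat`) for data-player `j`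
against the mixed profile `σ` of the other data-players. -/
noncomputable def regretG' {Θ A' : Type} [Fintype Θ] [Fintype A'] [Nonempty A'] {m : ℕ}
    (uG' : A' → Multiset A' → Θ → ℝ) (σ : Fin m → Θ × A' → ℝ) (j : Fin m)
    (ahat : A') (th : Θ) : ℝ :=
  (Finset.univ.sup' Finset.univ_nonempty fun a => expUG' uG' σ j a th)
    - expUG' uG' σ j ahat th

/-- The (expected) revelation-game utility of data-player `j` reporting the pair `x`
against the mixed profile `σ` of the other data-players: the negative of the maximum
of the `G`-regret of the reported type and the `G'`-regret of the reported pair. -/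
noncomputable def revU {Θ A A' : Type} [Fintype Θ] [Fintype A] [Fintype A']
    [Nonempty A] [Nonempty A'] {m : ℕ}
    (uG : A → Multiset A → Θ → ℝ) (uG' : A' → Multiset A' → Θ → ℝ)
    (d : Fin m → A) (σ : Fin m → Θ × A' → ℝ) (j : Fin m) (x : Θ × A') : ℝ :=
  -max (regretG uG d j x.1) (regretG' uG' σ j x.2 x.1)

/-- The empirical (uniform) distribution of data-player `j`'s choices up to time `t`
along the fictitious-play sequence `x`. -/
noncomputable def empirical {X : Type} [DecidableEq X] {m : ℕ}
    (x : ℕ → Fin m → X) (t : ℕ) (j : Fin m) (y : X) : ℝ :=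
  (((Finset.range (t + 1)).filter fun s => x s j = y).card : ℝ) / (t + 1)

/-- The expected value of the evaluation function `V` when data-player `j` plays the
pure pair `y` and the other data-players play the mixed profile `σ`. -/
noncomputable def expV {Θ A' : Type} [Fintype Θ] [Fintype A'] {m : ℕ}
    (V : (Fin m → Θ × A') → ℝ) (σ : Fin m → Θ × A' → ℝ) (j : Fin m) (y : Θ × A') : ℝ :=
  ∑ p : {k : Fin m // k ≠ j} → Θ × A',
    (∏ k, σ k.1 (p k)) * V (fun i => if h : i = j then y else p ⟨i, h⟩)

/-- The expected value of the evaluation function `V` under the mixed profile `σ`. -/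
noncomputable def expVfull {Θ A' : Type} [Fintype Θ] [Fintype A'] {m : ℕ}
    (V : (Fin m → Θ × A') → ℝ) (σ : Fin m → Θ × A' → ℝ) : ℝ :=
  ∑ p : Fin m → Θ × A', (∏ j, σ j (p j)) * V p

section Aux

private lemma tendsto_sup'_aux {ι : Type*} (s : Finset ι) (hs : s.Nonempty)
    (f : ι → ℕ → ℝ) (g : ι → ℝ)
    (h : ∀ i, Tendsto (fun t => f i t) atTop (nhds (g i))) :
    Tendsto (fun t => s.sup' hs fun i => f i t) atTop (nhds (s.sup' hs g)) := by
  induction hs using Finset.Nonempty.cons_induction with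
  | singleton a =>
      simp only [Finset.sup'_singleton]
      exact h a
  | cons a s ha hs ih =>
      simp only [Finset.sup'_cons hs]
      exact (h a).max ih

private lemma tendsto_mix {Θ A' : Type} [Fintype Θ] [Fintype A']
    [DecidableEq Θ] [DecidableEq A'] {m : ℕ}
    (x : ℕ → Fin m → Θ × A') (σstar : Fin m → Θ × A' → ℝ)
    (hconv : ∀ j y, Tendsto (fun t => empirical x t j y) atTop (nhds (σstar j y)))
    (j : Fin m) (c : ({k : Fin m // k ≠ j} → Θ × A') → ℝ) :
    Tendsto (fun t => ∑ p : {k : Fin m // k ≠ j} → Θ × A',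
        (∏ k, empirical x t k.1 (p k)) * c p) atTop
      (nhds (∑ p : {k : Fin m // k ≠ j} → Θ × A', (∏ k, σstar k.1 (p k)) * c p)) := by
  refine tendsto_finset_sum _ fun p _ => ?_
  exact (tendsto_finset_prod _ fun k _ => hconv k.1 (p k)).mul_const _

private lemma empirical_nonneg {X : Type} [DecidableEq X] {m : ℕ}
    (x : ℕ → Fin m → X) (t : ℕ) (j : Fin m) (y : X) : 0 ≤ empirical x t j y := by
  unfold empirical
  positivity

private lemma empirical_sum {X : Type} [Fintype X] [DecidableEq X] {m : ℕ}
    (x : ℕ → Fin m → X) (t : ℕ) (j : Fin m) : ∑ y, empirical x t j y = 1 := by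
  unfold empirical
  rw [← Finset.sum_div, div_eq_one_iff_eq (by positivity)]
  rw [← Nat.cast_sum]
  rw [← Finset.card_eq_sum_card_fiberwise (f := fun s => x s j) (t := Finset.univ)
    (fun a _ => Finset.mem_univ _)]
  simp

private lemma revU_nonpos {Θ A A' : Type} [Fintype Θ] [Fintype A] [Fintype A']
    [Nonempty A] [Nonempty A'] {m : ℕ}
    (uG : A → Multiset A → Θ → ℝ) (uG' : A' → Multiset A' → Θ → ℝ)
    (d : Fin m → A) (σ : Fin m → Θ × A' → ℝ) (j : Fin m) (z : Θ × A') :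
    revU uG uG' d σ j z ≤ 0 := by
  unfold revU
  have h1 : 0 ≤ regretG uG d j z.1 := by
    unfold regretG
    rw [sub_nonneg]
    exact Finset.le_sup' (fun a => uG a (othersData d j) z.1) (Finset.mem_univ (d j))
  have h2 := le_max_left (regretG uG d j z.1) (regretG' uG' σ j z.2 z.1)
  linarith

private lemma frequently_eq_of_pos {X : Type} [DecidableEq X] {m : ℕ}
    (x : ℕ → Fin m → X) (j : Fin m) (y : X) (L : ℝ)
    (hconv : Tendsto (fun t => empirical x t j y) atTop (nhds L))
    (hpos : 0 < L) :
    ∃ᶠ t in atTop, x (t + 1) j = y := by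
  by_contra hc
  rw [Filter.not_frequently, eventually_atTop] at hc
  obtain ⟨N, hN⟩ := hc
  have hbound : ∀ t, N ≤ t → empirical x t j y ≤ ((N : ℝ) + 1) / ((t : ℝ) + 1) := by
    intro t _
    unfold empirical
    have hsub : (Finset.range (t + 1)).filter (fun s => x s j = y) ⊆ Finset.range (N + 1) := by
      intro s hs
      rw [Finset.mem_filter, Finset.mem_range] at hs
      rw [Finset.mem_range]
      by_contra hsN
      push_neg at hsN
      have h1 : N ≤ s - 1 := by omega
      have h2 : s - 1 + 1 = s := by omega
      exact hN (s - 1) h1 (h2 ▸ hs.2)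
    have hcard : (((Finset.range (t + 1)).filter (fun s => x s j = y)).card : ℝ) ≤ (N : ℝ) + 1 := by
      have := Finset.card_le_card hsub
      rw [Finset.card_range] at this
      exact_mod_cast this
    gcongr
  have h0 : Tendsto (fun t => empirical x t j y) atTop (nhds 0) := by
    refine squeeze_zero' (Filter.Eventually.of_forall fun t => empirical_nonneg x t j y)
      (eventually_atTop.mpr ⟨N, hbound⟩) ?_
    have h2 := (tendsto_const_div_atTop_nhds_zero_nat ((N : ℝ) + 1)).comp
      (tendsto_add_atTop_nat 1)
    refine Filter.Tendsto.congr (fun t => ?_) h2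
    simp only [Function.comp]
    push_cast
    ring
  have := tendsto_nhds_unique hconv h0
  linarith

private lemma expVfull_eq_sum {Θ A' : Type} [Fintype Θ] [Fintype A']
    [DecidableEq Θ] [DecidableEq A'] {m : ℕ}
    (V : (Fin m → Θ × A') → ℝ) (σ : Fin m → Θ × A' → ℝ) (j : Fin m) :
    expVfull V σ = ∑ y : Θ × A', σ j y * expV V σ j y := by
  classical
  let e : (Fin m → Θ × A') ≃ (Θ × A') × ({k : Fin m // k ≠ j} → Θ × A') :=
    { toFun := fun p => (p j, fun k => p k.1)
      invFun := fun q => fun i => if h : i = j then q.1 else q.2 ⟨i, h⟩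
      left_inv := fun p => by
        funext i
        by_cases h : i = j <;> simp [h]
      right_inv := fun q => by
        refine Prod.ext ?_ ?_
        · simp
        · funext k
          simp [k.2] }
  have hcomp := Equiv.sum_comp e.symm (fun p => (∏ i, σ i (p i)) * V p)
  rw [expVfull, ← hcomp, Fintype.sum_prod_type]
  refine Finset.sum_congr rfl fun y _ => ?_
  rw [expV, Finset.mul_sum]
  refine Finset.sum_congr rfl fun q _ => ?_
  have he : e.symm (y, q) = fun i => if h : i = j then y else q ⟨i, h⟩ := rfl
  have hprod : (∏ i, σ i (e.symm (y, q) i))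
      = σ j y * ∏ k : {k : Fin m // k ≠ j}, σ k.1 (q k) := by
    rw [← Finset.mul_prod_erase Finset.univ (fun i => σ i (e.symm (y, q) i))
      (Finset.mem_univ j)]
    congr 1
    · rw [he]; simp
    · rw [Finset.prod_subtype (p := fun k => k ≠ j) (Finset.univ.erase j)
        (fun i => by simp) (fun i => σ i (e.symm (y, q) i))]
      refine Finset.prod_congr rfl fun k _ => ?_
      rw [he]
      simp [k.2]
  rw [hprod, mul_assoc, he]

end Aux

/-- If a run of *pessimistic* revelation game fictitious play (each step selecting a
`V`-minimizing pair among the ε-best responses to the empirical history) converges,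
i.e. the empirical mixed strategies converge pointwise to a mixed profile `σstar`,
then `σstar` is locally `V`-optimal: for every data-player `j` and every unilateral
deviation whose expected revelation-game loss against the others' limit profile is
strictly less than `ε` (equivalently, whose expected revelation-game utility is
strictly greater than `-ε`), the expected value of `V` at the deviation is at least
the expected value of `V` at `σstar`. -/
theorem pessimistic_RFP_limit_is_locally_V_optimal
    (Θ A A' : Type) [Fintype Θ] [Fintype A] [Fintype A']
    [Nonempty Θ] [Nonempty A] [Nonempty A'] [DecidableEq Θ] [DecidableEq A']
    (m : ℕ) (uG : A → Multiset A → Θ → ℝ) (uG' : A' → Multiset A' → Θ → ℝ)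
    (d : Fin m → A) (V : (Fin m → Θ × A') → ℝ)
    (ε : ℝ) (hε : 0 < ε)
    -- the fictitious-play sequence of pure profiles
    (x : ℕ → Fin m → Θ × A')
    -- each step selects, among the ε-best responses to the empirical history, a pair
    -- minimizing the expected value of V (pessimistic fictitious play)
    (hRFP : ∀ t j,
      ((Finset.univ.sup' Finset.univ_nonempty fun z => revU uG uG' d (empirical x t) j z)
          - revU uG uG' d (empirical x t) j (x (t + 1) j) ≤ ε) ∧
      (∀ y : Θ × A',
        ((Finset.univ.sup' Finset.univ_nonempty fun z => revU uG uG' d (empirical x t) j z)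
            - revU uG uG' d (empirical x t) j y ≤ ε) →
        expV V (empirical x t) j (x (t + 1) j) ≤ expV V (empirical x t) j y))
    -- the empirical mixed strategies converge to σstar
    (σstar : Fin m → Θ × A' → ℝ)
    (hconv : ∀ j y, Tendsto (fun t => empirical x t j y) atTop (nhds (σstar j y))) :
    ∀ j (y : Θ × A'), -ε < revU uG uG' d σstar j y →
      expVfull V σstar ≤ expV V σstar j y := by
  intro j y hy
  classical
  -- Tendsto of expUG'
  have tUG' : ∀ (a : A') (th : Θ),
      Tendsto (fun t => expUG' uG' (empirical x t) j a th) atTop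
        (nhds (expUG' uG' σstar j a th)) := by
    intro a th
    unfold expUG'
    exact tendsto_mix x σstar hconv j _
  -- Tendsto of revU
  have trevU : ∀ z : Θ × A',
      Tendsto (fun t => revU uG uG' d (empirical x t) j z) atTop
        (nhds (revU uG uG' d σstar j z)) := by
    intro z
    unfold revU regretG'
    refine Tendsto.neg (Tendsto.max tendsto_const_nhds ?_)
    exact (tendsto_sup'_aux _ _ _ _ fun a => tUG' a z.1).sub (tUG' z.2 z.1)
  -- Tendsto of the sup of revU
  have hsup_t : Tendsto
      (fun t => Finset.univ.sup' Finset.univ_nonempty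
        fun z => revU uG uG' d (empirical x t) j z) atTop
      (nhds (Finset.univ.sup' Finset.univ_nonempty fun z => revU uG uG' d σstar j z)) :=
    tendsto_sup'_aux _ _ _ _ trevU
  -- Tendsto of expV
  have texpV : ∀ z : Θ × A',
      Tendsto (fun t => expV V (empirical x t) j z) atTop (nhds (expV V σstar j z)) := by
    intro z
    unfold expV
    exact tendsto_mix x σstar hconv j _
  -- eventually, y is an ε-best response
  have hlim_lt : (Finset.univ.sup' Finset.univ_nonempty fun z => revU uG uG' d σstar j z)
      - revU uG uG' d σstar j y < ε := by
    have h1 : (Finset.univ.sup' Finset.univ_nonempty fun z => revU uG uG' d σstar j z) ≤ 0 :=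
      Finset.sup'_le _ _ fun z _ => revU_nonpos uG uG' d σstar j z
    linarith
  have hev1 : ∀ᶠ t in atTop,
      (Finset.univ.sup' Finset.univ_nonempty fun z => revU uG uG' d (empirical x t) j z)
        - revU uG uG' d (empirical x t) j y ≤ ε :=
    ((hsup_t.sub (trevU y)).eventually_lt_const hlim_lt).mono fun t ht => ht.le
  have hev2 : ∀ᶠ t in atTop,
      expV V (empirical x t) j (x (t + 1) j) ≤ expV V (empirical x t) j y :=
    hev1.mono fun t ht => (hRFP t j).2 y ht
  -- σstar j is a probability distribution
  have hσ0 : ∀ y' : Θ × A', 0 ≤ σstar j y' := fun y' =>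
    ge_of_tendsto' (hconv j y') fun t => empirical_nonneg x t j y'
  have hσ1 : ∑ y' : Θ × A', σstar j y' = 1 := by
    have h1 : Tendsto (fun t => ∑ y' : Θ × A', empirical x t j y') atTop
        (nhds (∑ y' : Θ × A', σstar j y')) :=
      tendsto_finset_sum _ fun y' _ => hconv j y'
    have h2 : (fun t => ∑ y' : Θ × A', empirical x t j y') = fun _ => (1 : ℝ) :=
      funext fun t => empirical_sum x t j
    rw [h2] at h1
    exact tendsto_nhds_unique h1 tendsto_const_nhds
  -- key step: any y' in the support of σstar j has expV at most that of y
  have key : ∀ y' : Θ × A', 0 < σstar j y' → expV V σstar j y' ≤ expV V σstar j y := by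
    intro y' hpos
    have hfreq : ∃ᶠ t in atTop, x (t + 1) j = y' :=
      frequently_eq_of_pos x j y' (σstar j y') (hconv j y') hpos
    rw [frequently_iff_neBot] at hfreq
    haveI := hfreq
    refine le_of_tendsto_of_tendsto
      (b := atTop ⊓ Filter.principal {t | x (t + 1) j = y'})
      ((texpV y').mono_left inf_le_left) ((texpV y).mono_left inf_le_left) ?_
    have hmem : ∀ᶠ t in atTop ⊓ Filter.principal {t | x (t + 1) j = y'}, x (t + 1) j = y' :=
      eventually_inf_principal.mpr (Filter.Eventually.of_forall fun t ht => ht)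
    filter_upwards [hmem, hev2.filter_mono inf_le_left] with t h1 h2
    calc expV V (empirical x t) j y' = expV V (empirical x t) j (x (t + 1) j) := by rw [h1]
      _ ≤ expV V (empirical x t) j y := h2
  -- conclude
  rw [expVfull_eq_sum V σstar j]
  calc ∑ y' : Θ × A', σstar j y' * expV V σstar j y'
      ≤ ∑ y' : Θ × A', σstar j y' * expV V σstar j y := by
        refine Finset.sum_le_sum fun y' _ => ?_
        rcases (hσ0 y').lt_or_eq with h | h
        · exact mul_le_mul_of_nonneg_left (key y' h) h.le
        · rw [← h]; simp
    _ = (∑ y' : Θ × A', σstar j y') * expV V σstar j y := by rw [Finset.sum_mul]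
    _ = expV V σstar j y := by rw [hσ1, one_mul]
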